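/- arXiv:1310.7090 — 6 statements merged into one kernel-verified Lean document; each statement's English description precedes it below -/
import Mathlib

section
/- If A_k is a stamp basis that is not admissible (i.e., does not generate every integer in [1, max(A_k)]), then there exists a stamp basis B_k of the same cardinality k whose range strictly exceeds the range of A_k; consequently every extremal stamp basis is admissible. -/
/-- `A` generates `c` if `c` is an element or a sum of two (possibly equal) elements. -/
def Generates (A : Finset ℕ) (c : ℕ) : Prop :=
  c ∈ A ∨ ∃ a ∈ A, ∃ b ∈ A, c = a + b

/-- `A` generates every integer in `[1, n]`, i.e. `A` is a stamp basis for `n`. -/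
def GeneratesUpTo (A : Finset ℕ) (n : ℕ) : Prop :=
  ∀ c, 1 ≤ c → c ≤ n → Generates A c

/-- The range of `A` is exactly `n`: `[1,n]` generated but not `n+1`. -/
def RangeIs (A : Finset ℕ) (n : ℕ) : Prop :=
  GeneratesUpTo A n ∧ ¬ Generates A (n + 1)

/-- The range of `A`: the largest `n` such that `A` generates all of `[1,n]`. -/
noncomputable def rangeOf (A : Finset ℕ) : ℕ :=
  sSup {n | GeneratesUpTo A n}

/-- `A` is admissible: it generates every integer in `[1, max A]`. -/
def Admissible (A : Finset ℕ) : Prop :=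
  ∀ a ∈ A, ∀ c, 1 ≤ c → c ≤ a → Generates A c

/-- `A` is an addition chain: `1 ∈ A` and every larger element is the sum of
two (possibly equal) smaller elements of `A`. -/
def AdditionChain (A : Finset ℕ) : Prop :=
  1 ∈ A ∧ ∀ a ∈ A, 1 < a → ∃ b ∈ A, ∃ c ∈ A, b < a ∧ c < a ∧ a = b + c

lemma generates_mono {A B : Finset ℕ} (h : A ⊆ B) {c : ℕ} (hc : Generates A c) :
    Generates B c := by
  rcases hc with h1 | ⟨a, ha, b, hb, rfl⟩
  · exact Or.inl (h h1)
  · exact Or.inr ⟨a, h ha, b, h hb, rfl⟩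

lemma generates_le {A : Finset ℕ} {c : ℕ} (hc : Generates A c) :
    c ≤ 2 * A.sum id := by
  have key : ∀ a ∈ A, a ≤ A.sum id := fun a ha =>
    Finset.single_le_sum (fun i _ => Nat.zero_le (id i)) ha
  rcases hc with h1 | ⟨a, ha, b, hb, rfl⟩
  · have := key c h1; omega
  · have := key a ha; have := key b hb; omega

lemma exists_rangeIs (A : Finset ℕ) : ∃ n, RangeIs A n := by
  classical
  have hex : ∃ m, ¬ Generates A (m + 1) := by
    refine ⟨2 * A.sum id, fun h => ?_⟩
    have := generates_le h
    omega
  refine ⟨Nat.find hex, ?_, Nat.find_spec hex⟩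
  intro c hc1 hc2
  have h := Nat.find_min hex (m := c - 1) (by omega)
  simp only [not_not] at h
  have : c - 1 + 1 = c := by omega
  rwa [this] at h

lemma rangeIs_rangeOf {A : Finset ℕ} {n : ℕ} (h : RangeIs A n) : rangeOf A = n := by
  have hset : {m | GeneratesUpTo A m} = Set.Iic n := by
    ext m
    simp only [Set.mem_setOf_eq, Set.mem_Iic]
    constructor
    · intro hm
      by_contra hc
      exact h.2 (hm (n + 1) (by omega) (by omega))
    · intro hm c hc1 hc2
      exact h.1 c hc1 (le_trans hc2 hm)
  rw [rangeOf, hset, csSup_Iic]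

/-- A non-admissible stamp basis can be improved without changing the cardinality;
consequently every extremal stamp basis is admissible. -/
theorem non_admissible_basis_not_extremal :
    (∀ (A : Finset ℕ) (n : ℕ), (∀ a ∈ A, 0 < a) → RangeIs A n → ¬ Admissible A →
      ∃ (B : Finset ℕ) (m : ℕ), (∀ b ∈ B, 0 < b) ∧ B.card = A.card ∧
        RangeIs B m ∧ n < m) ∧
    (∀ A : Finset ℕ, (∀ a ∈ A, 0 < a) →
      (∀ C : Finset ℕ, (∀ c ∈ C, 0 < c) → C.card = A.card → rangeOf C ≤ rangeOf A) →
      Admissible A) := by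
  have h1 : ∀ (A : Finset ℕ) (n : ℕ), (∀ a ∈ A, 0 < a) → RangeIs A n → ¬ Admissible A →
      ∃ (B : Finset ℕ) (m : ℕ), (∀ b ∈ B, 0 < b) ∧ B.card = A.card ∧
        RangeIs B m ∧ n < m := by
    intro A n hpos hr hadm
    simp only [Admissible, not_forall] at hadm
    obtain ⟨a, ha, c, hc1, hc2, hcng⟩ := hadm
    -- c is not generated, so c > n, so a > n : A has an element > n
    have hcn : n < c := by
      by_contra h
      exact hcng (hr.1 c hc1 (by omega))
    have han : n < a := lt_of_lt_of_le hcn hc2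
    set S := A.filter (· ≤ n) with hS
    set t := (A.filter (fun x => ¬ x ≤ n)).card with ht
    have ht1 : 1 ≤ t := by
      rw [ht]
      refine Finset.card_pos.2 ⟨a, ?_⟩
      simp only [Finset.mem_filter]
      exact ⟨ha, by omega⟩
    set B := S ∪ Finset.Ioc n (n + t) with hB
    have hBpos : ∀ b ∈ B, 0 < b := by
      intro b hb
      rcases Finset.mem_union.1 hb with h | h
      · exact hpos b (Finset.mem_filter.1 h).1
      · have := Finset.mem_Ioc.1 h; omega
    have hcard : B.card = A.card := by
      rw [hB, Finset.card_union_of_disjoint, Nat.card_Ioc]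
      · simp only [Nat.add_sub_cancel_left]
        rw [hS, ht, Finset.card_filter_add_card_filter_not]
      · rw [Finset.disjoint_left]
        intro x hx hx'
        have := (Finset.mem_filter.1 hx).2
        have := (Finset.mem_Ioc.1 hx').1
        omega
    have hgenB : GeneratesUpTo B (n + t) := by
      intro d hd1 hd2
      by_cases hdn : d ≤ n
      · have hg := hr.1 d hd1 hdn
        refine generates_mono ?_ (A := S) ?_
        · exact Finset.subset_union_left
        · rcases hg with h | ⟨x, hx, y, hy, rfl⟩
          · exact Or.inl (Finset.mem_filter.2 ⟨h, by simpa using hdn⟩)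
          · exact Or.inr ⟨x, Finset.mem_filter.2 ⟨hx, show x ≤ n by omega⟩,
              y, Finset.mem_filter.2 ⟨hy, show y ≤ n by omega⟩, rfl⟩
      · exact Or.inl (Finset.mem_union_right _ (Finset.mem_Ioc.2 ⟨by omega, hd2⟩))
    obtain ⟨m, hm⟩ := exists_rangeIs B
    have hnm : n + t ≤ m := by
      by_contra h
      exact hm.2 (hgenB (m + 1) (by omega) (by omega))
    exact ⟨B, m, hBpos, hcard, hm, by omega⟩
  refine ⟨h1, ?_⟩
  intro A hpos hmax
  by_contra hadm
  obtain ⟨n, hn⟩ := exists_rangeIs A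
  obtain ⟨B, m, hBpos, hcard, hBr, hlt⟩ := h1 A n hpos hn hadm
  have := hmax B hBpos hcard
  rw [rangeIs_rangeOf hn, rangeIs_rangeOf hBr] at this
  omega
end

section
/- If A_k is an admissible stamp basis with range exactly n, then B_{k+1} = {1} ∪ (A_k + 1) is an admissible stamp chain with range exactly n + 2. -/
/-!
A representation `c = a + b` in `A` lifts to `c + 2 = (a + 1) + (b + 1)` in
`B = {1} ∪ (A + 1)`, and `c ∈ A` to `c + 2 = 1 + (c + 1)`, always with strictly smaller
summands. Conversely a representation of `n + 3` in `B` either forces `n + 2 ∈ A` or `n + 1`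
into `A + A`. An admissible basis of range `n` has all elements `≤ n`, so the range moves by
exactly `2`; and `a + 1 ∈ B` is `1 + 1` or the lift of `a - 1`, which `A` generates by
admissibility, so `B` is an addition chain.
-/

def shiftWithOne (A : Finset ℕ) : Finset ℕ :=
  insert 1 (A.image (· + 1))

section shiftWithOne

variable {A : Finset ℕ}

theorem one_mem_shiftWithOne (A : Finset ℕ) : 1 ∈ shiftWithOne A :=
  Finset.mem_insert_self _ _

theorem add_one_mem_shiftWithOne {a : ℕ} (ha : a ∈ A) : a + 1 ∈ shiftWithOne A :=
  Finset.mem_insert_of_mem (Finset.mem_image_of_mem _ ha)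

theorem mem_shiftWithOne {x : ℕ} : x ∈ shiftWithOne A ↔ x = 1 ∨ ∃ a ∈ A, x = a + 1 := by
  simp only [shiftWithOne, Finset.mem_insert, Finset.mem_image, eq_comm (a := x)]

theorem le_of_mem_shiftWithOne {n x : ℕ} (hle : ∀ a ∈ A, a ≤ n) (hx : x ∈ shiftWithOne A) :
    x ≤ n + 2 := by
  rcases mem_shiftWithOne.mp hx with rfl | ⟨a, ha, rfl⟩
  · omega
  · have := hle a ha
    omega

theorem exists_lt_sum_shiftWithOne_of_generates {c : ℕ} (h : Generates A c) :
    ∃ b ∈ shiftWithOne A, ∃ d ∈ shiftWithOne A, b < c + 2 ∧ d < c + 2 ∧ c + 2 = b + d := by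
  rcases h with hc | ⟨a, ha, b, hb, rfl⟩
  · exact ⟨1, one_mem_shiftWithOne A, c + 1, add_one_mem_shiftWithOne hc, by omega, by omega,
      by omega⟩
  · exact ⟨a + 1, add_one_mem_shiftWithOne ha, b + 1, add_one_mem_shiftWithOne hb, by omega,
      by omega, by omega⟩

theorem generates_shiftWithOne_add_two {c : ℕ} (h : Generates A c) :
    Generates (shiftWithOne A) (c + 2) :=
  let ⟨b, hb, d, hd, _, _, hsum⟩ := exists_lt_sum_shiftWithOne_of_generates h
  Or.inr ⟨b, hb, d, hd, hsum⟩

theorem generates_or_mem_of_generates_shiftWithOne_add_three {c : ℕ}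
    (h : Generates (shiftWithOne A) (c + 3)) : Generates A (c + 1) ∨ c + 2 ∈ A := by
  rcases h with hc | ⟨x, hx, y, hy, hxy⟩
  · rcases mem_shiftWithOne.mp hc with h1 | ⟨a, ha, hca⟩
    · omega
    · exact Or.inr (by rwa [show c + 2 = a by omega])
  rcases mem_shiftWithOne.mp hx with rfl | ⟨a, ha, rfl⟩ <;>
    rcases mem_shiftWithOne.mp hy with rfl | ⟨b, hb, rfl⟩
  · omega
  · exact Or.inl (Or.inl (by rwa [show c + 1 = b by omega]))
  · exact Or.inl (Or.inl (by rwa [show c + 1 = a by omega]))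
  · exact Or.inl (Or.inr ⟨a, ha, b, hb, by omega⟩)

theorem GeneratesUpTo.shiftWithOne {n : ℕ} (h : GeneratesUpTo A n) :
    GeneratesUpTo (shiftWithOne A) (n + 2) := by
  intro c hc1 hcn
  obtain rfl | rfl | ⟨c, rfl⟩ : c = 1 ∨ c = 2 ∨ ∃ d, c = d + 3 :=
    by rcases c with _ | _ | _ | d <;> simp_all
  · exact Or.inl (one_mem_shiftWithOne A)
  · exact Or.inr ⟨1, one_mem_shiftWithOne A, 1, one_mem_shiftWithOne A, rfl⟩
  · exact generates_shiftWithOne_add_two (h (c + 1) (by omega) (by omega))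

theorem RangeIs.shiftWithOne {n : ℕ} (h : RangeIs A n) (hle : ∀ a ∈ A, a ≤ n) :
    RangeIs (shiftWithOne A) (n + 2) := by
  refine ⟨h.1.shiftWithOne, fun hgen => ?_⟩
  rcases generates_or_mem_of_generates_shiftWithOne_add_three hgen with hA | hmem
  · exact h.2 hA
  · exact absurd (hle _ hmem) (by omega)

theorem Admissible.le_of_not_generates {n : ℕ} (hadm : Admissible A)
    (h : ¬ Generates A (n + 1)) : ∀ a ∈ A, a ≤ n := by
  intro a ha
  by_contra! hlt
  exact h (hadm a ha (n + 1) (by omega) hlt)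

theorem admissible_of_generatesUpTo {n : ℕ} (hgen : GeneratesUpTo A n)
    (hle : ∀ a ∈ A, a ≤ n) : Admissible A :=
  fun a ha c hc1 hca => hgen c hc1 (hca.trans (hle a ha))

theorem Admissible.additionChain_shiftWithOne (hadm : Admissible A) :
    AdditionChain (shiftWithOne A) := by
  refine ⟨one_mem_shiftWithOne A, fun x hx hx1 => ?_⟩
  rcases mem_shiftWithOne.mp hx with rfl | ⟨a, ha, rfl⟩
  · omega
  obtain rfl | ⟨c, rfl⟩ : a = 1 ∨ ∃ c, a = c + 2 := by
    rcases a with _ | _ | c <;> simp_all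
  · exact ⟨1, one_mem_shiftWithOne A, 1, one_mem_shiftWithOne A, by omega, by omega, rfl⟩
  · exact exists_lt_sum_shiftWithOne_of_generates (hadm _ ha (c + 1) (by omega) (by omega))

end shiftWithOne

theorem shift_admissible_basis_gives_stamp_chain_general
    (A : Finset ℕ) (n : ℕ)
    (hadm : Admissible A)
    (hrange : RangeIs A n) :
    Admissible (insert 1 (A.image (· + 1))) ∧
    AdditionChain (insert 1 (A.image (· + 1))) ∧
    RangeIs (insert 1 (A.image (· + 1))) (n + 2) := by
  have hle : ∀ a ∈ A, a ≤ n := hadm.le_of_not_generates hrange.2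
  have hrangeB : RangeIs (shiftWithOne A) (n + 2) := hrange.shiftWithOne hle
  exact ⟨admissible_of_generatesUpTo hrangeB.1 fun _ => le_of_mem_shiftWithOne hle,
    hadm.additionChain_shiftWithOne, hrangeB⟩

/-- If A is an admissible stamp basis with range exactly n, then
B = {1} ∪ (A+1) is an admissible stamp chain with range exactly n+2. -/
theorem shift_admissible_basis_gives_stamp_chain
    (A : Finset ℕ) (n : ℕ)
    (hpos : ∀ a ∈ A, 0 < a)
    (hadm : Admissible A)
    (hrange : RangeIs A n) :
    Admissible (insert 1 (A.image (· + 1))) ∧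
    AdditionChain (insert 1 (A.image (· + 1))) ∧
    RangeIs (insert 1 (A.image (· + 1))) (n + 2) :=
  shift_admissible_basis_gives_stamp_chain_general A n hadm hrange
end

section
/- If A is an admissible stamp basis, then B = {1} ∪ (A + 1) is an addition chain. -/
/-!
Write `B = {1} ∪ (A + 1)`. For `a ∈ A` with `a ≥ 2`, admissibility generates `a - 1` from `A`:
either `a - 1 ∈ A`, and then `a + 1` is the sum of `a ∈ B` and `1 ∈ B`; or `a - 1 = s + t`, and
then `a + 1 = (s + 1) + (t + 1)`. The remaining elements `1` and `2 = 1 + 1` are immediate.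
-/

section ShiftedBasis

variable {A : Finset ℕ}

theorem succ_mem_insert_one_image_succ {a : ℕ} (ha : a ∈ A) :
    a + 1 ∈ insert 1 (A.image (· + 1)) :=
  Finset.mem_insert_of_mem (Finset.mem_image_of_mem _ ha)

theorem Generates.exists_add_two_eq {c : ℕ} (h : Generates A c) :
    ∃ b ∈ insert 1 (A.image (· + 1)), ∃ d ∈ insert 1 (A.image (· + 1)),
      b < c + 2 ∧ d < c + 2 ∧ c + 2 = b + d := by
  rcases h with hc | ⟨s, hs, t, ht, rfl⟩
  · exact ⟨c + 1, succ_mem_insert_one_image_succ hc, 1, Finset.mem_insert_self 1 _,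
      by omega, by omega, by omega⟩
  · exact ⟨s + 1, succ_mem_insert_one_image_succ hs, t + 1, succ_mem_insert_one_image_succ ht,
      by omega, by omega, by omega⟩

end ShiftedBasis

theorem shift_admissible_basis_is_addition_chain_general
    (A : Finset ℕ)
    (hadm : Admissible A) :
    AdditionChain (insert 1 (A.image (· + 1))) := by
  refine ⟨Finset.mem_insert_self 1 _, fun x hx hx1 => ?_⟩
  rcases Finset.mem_insert.mp hx with rfl | hx
  · omega
  obtain ⟨a, ha, rfl⟩ := Finset.mem_image.mp hx
  match a, ha with
  | 0, _ => omega
  | 1, _ => exact ⟨1, Finset.mem_insert_self 1 _, 1, Finset.mem_insert_self 1 _,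
      by omega, by omega, rfl⟩
  | c + 2, ha => exact (hadm _ ha (c + 1) (by omega) (by omega)).exists_add_two_eq

/-- If A is an admissible stamp basis, then {1} ∪ (A+1) is an addition chain. -/
theorem shift_admissible_basis_is_addition_chain
    (A : Finset ℕ)
    (hpos : ∀ a ∈ A, 0 < a)
    (hadm : Admissible A) :
    AdditionChain (insert 1 (A.image (· + 1))) :=
  shift_admissible_basis_is_addition_chain_general A hadm
end

section
/- If k > 1 and B_k is an admissible stamp chain with range exactly n, then A_{k−1} = {b − 1 : b ∈ B_k, b > 1} is an admissible stamp basis with range exactly n − 2. -/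
/-!
Subtracting 1 from the elements `b > 1` of `B` turns "`c + 2` is generated by `B`" into "`c` is
generated by `A`": a sum `s + t` with `s, t ≥ 2` becomes `(s - 1) + (t - 1)`, and a sum `1 + t`
becomes the single element `t - 1`. Conversely, since `1 ∈ B`, every element or sum of two elements
of `A` comes back as a sum of two elements of `B`. The chain property is what makes the first
direction work for elements of `B`: each `b ∈ B` with `b > 1` is itself a sum of two smaller
elements, so everything generated by `B` above `1` is a sum of two positive elements.
-/

/-- The set `A_{k-1}` obtained from `B = B_k`. -/
def unshift (B : Finset ℕ) : Finset ℕ :=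
  (B.filter (fun b => 1 < b)).image (· - 1)

section

variable {B : Finset ℕ}

theorem mem_unshift {x : ℕ} : x ∈ unshift B ↔ x + 1 ∈ B ∧ 1 ≤ x := by
  simp only [unshift, Finset.mem_image, Finset.mem_filter]
  constructor
  · rintro ⟨b, ⟨hb, hb1⟩, rfl⟩
    exact ⟨by rwa [Nat.sub_add_cancel hb1.le], by omega⟩
  · rintro ⟨hx, hx1⟩
    exact ⟨x + 1, ⟨hx, by omega⟩, by omega⟩

theorem Generates.add_two_of_unshift (h1 : 1 ∈ B) {c : ℕ} (h : Generates (unshift B) c) :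
    Generates B (c + 2) := by
  rcases h with hc | ⟨a, ha, b, hb, rfl⟩
  · exact Or.inr ⟨c + 1, (mem_unshift.mp hc).1, 1, h1, by omega⟩
  · exact Or.inr ⟨a + 1, (mem_unshift.mp ha).1, b + 1, (mem_unshift.mp hb).1, by omega⟩

theorem generates_unshift_of_eq_add {c s t : ℕ} (hc : 1 ≤ c) (hs : s ∈ B) (ht : t ∈ B)
    (hs0 : 0 < s) (ht0 : 0 < t) (hst : c + 2 = s + t) : Generates (unshift B) c := by
  have mem_of {x : ℕ} (hx : x + 1 ∈ B) (hx1 : 1 ≤ x) : x ∈ unshift B := mem_unshift.mpr ⟨hx, hx1⟩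
  rcases Nat.eq_or_lt_of_le hs0 with rfl | hs1
  · exact Or.inl (mem_of (by rwa [show c + 1 = t by omega]) hc)
  rcases Nat.eq_or_lt_of_le ht0 with rfl | ht1
  · exact Or.inl (mem_of (by rwa [show c + 1 = s by omega]) hc)
  refine Or.inr ⟨s - 1, mem_of ?_ (by omega), t - 1, mem_of ?_ (by omega), by omega⟩
  · rwa [Nat.sub_add_cancel hs0]
  · rwa [Nat.sub_add_cancel ht0]

theorem AdditionChain.exists_pos_add_eq (hB : AdditionChain B) {m : ℕ} (hm : 2 ≤ m)
    (h : Generates B m) : ∃ s ∈ B, ∃ t ∈ B, 0 < s ∧ 0 < t ∧ m = s + t := by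
  have of_mem (hmB : m ∈ B) : ∃ s ∈ B, ∃ t ∈ B, 0 < s ∧ 0 < t ∧ m = s + t := by
    obtain ⟨s, hs, t, ht, hsm, htm, rfl⟩ := hB.2 m hmB (by omega)
    exact ⟨s, hs, t, ht, by omega, by omega, rfl⟩
  rcases h with hmB | ⟨s, hs, t, ht, rfl⟩
  · exact of_mem hmB
  rcases Nat.eq_zero_or_pos s with rfl | hs0
  · exact of_mem (by rwa [zero_add])
  rcases Nat.eq_zero_or_pos t with rfl | ht0
  · exact of_mem (by rwa [add_zero])
  exact ⟨s, hs, t, ht, hs0, ht0, rfl⟩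

theorem AdditionChain.generates_unshift (hB : AdditionChain B) {c : ℕ} (hc : 1 ≤ c)
    (h : Generates B (c + 2)) : Generates (unshift B) c := by
  obtain ⟨s, hs, t, ht, hs0, ht0, hst⟩ := hB.exists_pos_add_eq (by omega) h
  exact generates_unshift_of_eq_add hc hs ht hs0 ht0 hst

theorem AdditionChain.admissible_unshift (hB : AdditionChain B) (hadm : Admissible B) :
    Admissible (unshift B) := by
  intro a ha c hc hca
  have ha' := mem_unshift.mp ha
  rcases hca.eq_or_lt with rfl | hlt
  · exact Or.inl ha
  · exact hB.generates_unshift hc (hadm (a + 1) ha'.1 (c + 2) (by omega) (by omega))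

theorem two_le_of_rangeIs (h1 : 1 ∈ B) {n : ℕ} (h : RangeIs B n) : 2 ≤ n := by
  by_contra! hn
  interval_cases n
  · exact h.2 (Or.inl h1)
  · exact h.2 (Or.inr ⟨1, h1, 1, h1, rfl⟩)

theorem AdditionChain.rangeIs_unshift (hB : AdditionChain B) {n : ℕ} (h : RangeIs B n) :
    RangeIs (unshift B) (n - 2) := by
  have hn := two_le_of_rangeIs hB.1 h
  refine ⟨fun c hc hcn => hB.generates_unshift hc (h.1 (c + 2) (by omega) (by omega)), ?_⟩
  intro hgen
  have := hgen.add_two_of_unshift hB.1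
  rw [show n - 2 + 1 + 2 = n + 1 by omega] at this
  exact h.2 this

end

theorem unshift_admissible_chain_general
    (B : Finset ℕ) (n : ℕ)
    (hchain : AdditionChain B)
    (hadm : Admissible B)
    (hrange : RangeIs B n) :
    Admissible ((B.filter (fun b => 1 < b)).image (· - 1)) ∧
    RangeIs ((B.filter (fun b => 1 < b)).image (· - 1)) (n - 2) :=
  ⟨hchain.admissible_unshift hadm, hchain.rangeIs_unshift hrange⟩

/-- If k > 1 and B is an admissible stamp chain with range exactly n, then
A = {b - 1 : b ∈ B, b > 1} is an admissible stamp basis with range exactly n - 2. -/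
theorem unshift_admissible_chain
    (B : Finset ℕ) (n : ℕ)
    (hcard : 1 < B.card)
    (hpos : ∀ b ∈ B, 0 < b)
    (hchain : AdditionChain B)
    (hadm : Admissible B)
    (hrange : RangeIs B n) :
    Admissible ((B.filter (fun b => 1 < b)).image (· - 1)) ∧
    RangeIs ((B.filter (fun b => 1 < b)).image (· - 1)) (n - 2) :=
  unshift_admissible_chain_general B n hchain hadm hrange
end

section
/- The map A ↦ {1} ∪ (A+1) is a bijection between admissible stamp bases of cardinality k with range n, and admissible stamp chains of cardinality k+1 with range n+2; its inverse is B ↦ {b−1 : b ∈ B, b>1}. -/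
private lemma mem_shift {A : Finset ℕ} {b : ℕ} :
    b ∈ insert 1 (A.image (· + 1)) ↔ b = 1 ∨ ∃ a ∈ A, a + 1 = b := by
  simp

private lemma gen_shift {A : Finset ℕ} {c : ℕ} (h : Generates A c) :
    Generates (insert 1 (A.image (· + 1))) (c + 2) := by
  rcases h with h | ⟨a, ha, b, hb, rfl⟩
  · exact Or.inr ⟨1, Finset.mem_insert_self _ _, c + 1,
      Finset.mem_insert_of_mem (Finset.mem_image_of_mem _ h), by omega⟩
  · exact Or.inr ⟨a + 1, Finset.mem_insert_of_mem (Finset.mem_image_of_mem _ ha),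
      b + 1, Finset.mem_insert_of_mem (Finset.mem_image_of_mem _ hb), by omega⟩

private lemma gen_unshift {A : Finset ℕ} {c : ℕ} (hc : 1 ≤ c)
    (h : Generates (insert 1 (A.image (· + 1))) (c + 2)) :
    c + 1 ∈ A ∨ Generates A c := by
  rcases h with h | ⟨x, hx, y, hy, hxy⟩
  · rcases mem_shift.1 h with h | ⟨a, ha, hac⟩
    · omega
    · left; have : a = c + 1 := by omega
      exact this ▸ ha
  · rcases mem_shift.1 hx with rfl | ⟨a, ha, rfl⟩ <;>
      rcases mem_shift.1 hy with rfl | ⟨b, hb, rfl⟩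
    · omega
    · right; left; have : b = c := by omega
      exact this ▸ hb
    · right; left; have : a = c := by omega
      exact this ▸ ha
    · right; right; exact ⟨a, ha, b, hb, by omega⟩

private lemma mem_le_of_range {A : Finset ℕ} {n : ℕ} (hadm : Admissible A)
    (hr : ¬ Generates A (n + 1)) {a : ℕ} (ha : a ∈ A) : a ≤ n := by
  by_contra h
  exact hr (hadm a ha (n + 1) (by omega) (by omega))

private lemma mem_unshift_s13 {B : Finset ℕ} {c : ℕ} :
    c ∈ (B.filter (fun b => 1 < b)).image (· - 1) ↔ ∃ b ∈ B, 1 < b ∧ b - 1 = c := by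
  simp [Finset.mem_filter]
  tauto

private lemma g_f {A : Finset ℕ} (hA : ∀ a ∈ A, 0 < a) :
    ((insert 1 (A.image (· + 1))).filter (fun b => 1 < b)).image (· - 1) = A := by
  ext x
  rw [mem_unshift_s13]
  constructor
  · rintro ⟨b, hb, hb1, rfl⟩
    rcases mem_shift.1 hb with rfl | ⟨a, ha, rfl⟩
    · omega
    · simpa using ha
  · intro hx
    exact ⟨x + 1, mem_shift.2 (Or.inr ⟨x, hx, rfl⟩), by have := hA x hx; omega, rfl⟩

private lemma f_g {B : Finset ℕ} (hpos : ∀ b ∈ B, 0 < b) (h1 : 1 ∈ B) :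
    insert 1 (((B.filter (fun b => 1 < b)).image (· - 1)).image (· + 1)) = B := by
  ext x
  rw [mem_shift]
  constructor
  · rintro (rfl | ⟨a, ha, rfl⟩)
    · exact h1
    · rcases mem_unshift_s13.1 ha with ⟨b, hb, hb1, rfl⟩
      have : b - 1 + 1 = b := by omega
      exact this ▸ hb
  · intro hx
    by_cases hx1 : x = 1
    · exact Or.inl hx1
    · have := hpos x hx
      refine Or.inr ⟨x - 1, mem_unshift_s13.2 ⟨x, hx, by omega, rfl⟩, by omega⟩

/-- The map A ↦ {1} ∪ (A+1) is a bijection between admissible stamp bases of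
cardinality k with range n and admissible stamp chains of cardinality k+1 with
range n+2, with inverse B ↦ {b-1 : b ∈ B, b > 1}. -/
theorem shift_bijection (k n : ℕ) :
    Set.BijOn (fun A : Finset ℕ => insert 1 (A.image (· + 1)))
      {A : Finset ℕ | (∀ a ∈ A, 0 < a) ∧ Admissible A ∧ A.card = k ∧ RangeIs A n}
      {B : Finset ℕ | (∀ b ∈ B, 0 < b) ∧ Admissible B ∧ AdditionChain B ∧
        B.card = k + 1 ∧ RangeIs B (n + 2)} ∧
    Set.InvOn (fun B : Finset ℕ => (B.filter (fun b => 1 < b)).image (· - 1))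
      (fun A : Finset ℕ => insert 1 (A.image (· + 1)))
      {A : Finset ℕ | (∀ a ∈ A, 0 < a) ∧ Admissible A ∧ A.card = k ∧ RangeIs A n}
      {B : Finset ℕ | (∀ b ∈ B, 0 < b) ∧ Admissible B ∧ AdditionChain B ∧
        B.card = k + 1 ∧ RangeIs B (n + 2)} := by
  set f : Finset ℕ → Finset ℕ := fun A => insert 1 (A.image (· + 1)) with hf
  set g : Finset ℕ → Finset ℕ := fun B => (B.filter (fun b => 1 < b)).image (· - 1) with hg
  -- forward maps-to
  have hMT : ∀ A, (∀ a ∈ A, 0 < a) → Admissible A → A.card = k → RangeIs A n →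
      (∀ b ∈ f A, 0 < b) ∧ Admissible (f A) ∧ AdditionChain (f A) ∧
        (f A).card = k + 1 ∧ RangeIs (f A) (n + 2) := by
    intro A hpos hadm hcard ⟨hgen, hnot⟩
    have haleb : ∀ a ∈ A, a ≤ n := fun a ha => mem_le_of_range hadm hnot ha
    have hposB : ∀ b ∈ f A, 0 < b := by
      intro b hb
      rcases mem_shift.1 hb with rfl | ⟨a, _, rfl⟩ <;> omega
    have hgenB : GeneratesUpTo (f A) (n + 2) := by
      intro c hc1 hc2
      match c, hc1 with
      | 1, _ => exact Or.inl (Finset.mem_insert_self _ _)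
      | 2, _ => exact Or.inr ⟨1, Finset.mem_insert_self _ _, 1, Finset.mem_insert_self _ _, rfl⟩
      | (c + 3), _ =>
        have : Generates A (c + 1) := hgen (c + 1) (by omega) (by omega)
        exact gen_shift this
    have hnotB : ¬ Generates (f A) (n + 2 + 1) := by
      intro h
      have h' : Generates (f A) ((n + 1) + 2) := h
      rcases gen_unshift (by omega) h' with hmem | hg'
      · have := haleb _ hmem; omega
      · exact hnot hg'
    have hleB : ∀ b ∈ f A, b ≤ n + 2 := by
      intro b hb
      rcases mem_shift.1 hb with rfl | ⟨a, ha, rfl⟩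
      · omega
      · have := haleb a ha; omega
    refine ⟨hposB, ?_, ?_, ?_, hgenB, hnotB⟩
    · intro b hb c hc1 hc2
      exact hgenB c hc1 (le_trans hc2 (hleB b hb))
    · refine ⟨Finset.mem_insert_self _ _, ?_⟩
      intro b hb hb1
      rcases mem_shift.1 hb with rfl | ⟨a, ha, rfl⟩
      · omega
      · have ha1 : 0 < a := hpos a ha
        by_cases ha2 : a = 1
        · subst ha2
          exact ⟨1, Finset.mem_insert_self _ _, 1, Finset.mem_insert_self _ _,
            by omega, by omega, by omega⟩
        · rcases hadm a ha (a - 1) (by omega) (by omega) with hmem | ⟨s, hs, t, ht, hst⟩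
          · refine ⟨1, Finset.mem_insert_self _ _, (a - 1) + 1,
              Finset.mem_insert_of_mem (Finset.mem_image_of_mem _ hmem), by omega, by omega,
              by omega⟩
          · have hs1 : 0 < s := hpos s hs
            have ht1 : 0 < t := hpos t ht
            exact ⟨s + 1, Finset.mem_insert_of_mem (Finset.mem_image_of_mem _ hs),
              t + 1, Finset.mem_insert_of_mem (Finset.mem_image_of_mem _ ht),
              by omega, by omega, by omega⟩
    · have h1 : 1 ∉ A.image (· + 1) := by
        simp only [Finset.mem_image, not_exists]
        rintro a ⟨ha, ha1⟩
        have := hpos a ha; omega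
      rw [hf]
      simp only
      rw [Finset.card_insert_of_notMem h1,
        Finset.card_image_of_injective _ (fun x y h => by omega), hcard]
  -- backward
  have hBack : ∀ B, (∀ b ∈ B, 0 < b) → Admissible B → AdditionChain B →
      B.card = k + 1 → RangeIs B (n + 2) →
      ((∀ a ∈ g B, 0 < a) ∧ Admissible (g B) ∧ (g B).card = k ∧ RangeIs (g B) n) ∧
        f (g B) = B := by
    intro B hposB hadmB hchain hcardB ⟨hgenB, hnotB⟩
    have hfg : f (g B) = B := f_g hposB hchain.1
    have hbleB : ∀ b ∈ B, b ≤ n + 2 := fun b hb => mem_le_of_range hadmB hnotB hb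
    have hble' : ∀ b ∈ B, b ≤ n + 1 := by
      intro b hb
      by_contra h
      have hb2 : b = n + 2 := by have := hbleB b hb; omega
      subst hb2
      exact hnotB (Or.inr ⟨1, hchain.1, n + 2, hb, by omega⟩)
    have hposA : ∀ a ∈ g B, 0 < a := by
      intro a ha
      rcases mem_unshift_s13.1 ha with ⟨b, hb, hb1, rfl⟩
      omega
    have halen : ∀ a ∈ g B, a ≤ n := by
      intro a ha
      rcases mem_unshift_s13.1 ha with ⟨b, hb, hb1, rfl⟩
      have := hble' b hb; omega
    have hgenA : GeneratesUpTo (g B) n := by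
      intro c hc1 hc2
      have h : Generates B (c + 2) := hgenB (c + 2) (by omega) (by omega)
      rw [← hfg] at h
      rcases gen_unshift hc1 h with hmem | hgc
      · -- c + 1 ∈ g B, so c + 2 ∈ B; use the addition chain to decompose
        rcases mem_unshift_s13.1 hmem with ⟨b, hb, hb1, hbc⟩
        have hb2 : b = c + 2 := by omega
        subst hb2
        obtain ⟨x, hx, y, hy, hxlt, hylt, hxy⟩ := hchain.2 _ hb (by omega)
        have hx0 := hposB x hx
        have hy0 := hposB y hy
        by_cases hx1 : x = 1
        · subst hx1
          have hy2 : 1 < y := by omega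
          have : y - 1 = c := by omega
          exact Or.inl (this ▸ mem_unshift_s13.2 ⟨y, hy, hy2, rfl⟩)
        · by_cases hy1 : y = 1
          · subst hy1
            have hx2 : 1 < x := by omega
            have : x - 1 = c := by omega
            exact Or.inl (this ▸ mem_unshift_s13.2 ⟨x, hx, hx2, rfl⟩)
          · exact Or.inr ⟨x - 1, mem_unshift_s13.2 ⟨x, hx, by omega, rfl⟩,
              y - 1, mem_unshift_s13.2 ⟨y, hy, by omega, rfl⟩, by omega⟩
      · exact hgc
    have hnotA : ¬ Generates (g B) (n + 1) := by
      intro h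
      have := gen_shift h
      exact hnotB (by rw [← hfg]; exact this)
    have hcardA : (g B).card = k := by
      have hfilter : B.filter (fun b => 1 < b) = B.erase 1 := by
        ext x
        simp only [Finset.mem_filter, Finset.mem_erase]
        constructor
        · rintro ⟨h1, h2⟩; exact ⟨by omega, h1⟩
        · rintro ⟨h1, h2⟩; have := hposB x h2; exact ⟨h2, by omega⟩
      have hinj : Set.InjOn (· - 1) (B.filter (fun b => 1 < b)) := by
        intro x hx y hy hxy
        simp only [Finset.coe_filter, Set.mem_setOf_eq] at hx hy
        simp only at hxy
        omega
      rw [hg]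
      simp only
      rw [Finset.card_image_of_injOn hinj, hfilter, Finset.card_erase_of_mem hchain.1, hcardB]
      omega
    refine ⟨⟨hposA, ?_, hcardA, hgenA, hnotA⟩, hfg⟩
    intro a ha c hc1 hc2
    exact hgenA c hc1 (le_trans hc2 (halen a ha))
  have hMapsTo : Set.MapsTo f
      {A : Finset ℕ | (∀ a ∈ A, 0 < a) ∧ Admissible A ∧ A.card = k ∧ RangeIs A n}
      {B : Finset ℕ | (∀ b ∈ B, 0 < b) ∧ Admissible B ∧ AdditionChain B ∧
        B.card = k + 1 ∧ RangeIs B (n + 2)} := by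
    rintro A ⟨h1, h2, h3, h4⟩
    exact hMT A h1 h2 h3 h4
  have hLeft : Set.LeftInvOn g f
      {A : Finset ℕ | (∀ a ∈ A, 0 < a) ∧ Admissible A ∧ A.card = k ∧ RangeIs A n} := by
    rintro A ⟨h1, _⟩
    exact g_f h1
  have hRight : Set.RightInvOn g f
      {B : Finset ℕ | (∀ b ∈ B, 0 < b) ∧ Admissible B ∧ AdditionChain B ∧
        B.card = k + 1 ∧ RangeIs B (n + 2)} := by
    rintro B ⟨h1, h2, h3, h4, h5⟩
    exact (hBack B h1 h2 h3 h4 h5).2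
  refine ⟨⟨hMapsTo, hLeft.injOn, ?_⟩, hLeft, hRight⟩
  rintro B ⟨h1, h2, h3, h4, h5⟩
  obtain ⟨hA, hfg⟩ := hBack B h1 h2 h3 h4 h5
  exact ⟨g B, hA, hfg⟩
end

section
/- For every k > 1, the maximal range over all stamp chains of cardinality k equals 2 plus the maximal range over all stamp bases of cardinality k−1, i.e., n̄(k) = n(k−1) + 2. -/
/-- The maximum range over k-element stamp bases. -/
noncomputable def maxBasisRange (k : ℕ) : ℕ :=
  sSup {n | ∃ A : Finset ℕ, (∀ a ∈ A, 0 < a) ∧ A.card = k ∧ GeneratesUpTo A n}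

/-- The maximum range over k-element stamp chains. -/
noncomputable def maxChainRange (k : ℕ) : ℕ :=
  sSup {n | ∃ A : Finset ℕ, (∀ a ∈ A, 0 < a) ∧ AdditionChain A ∧ A.card = k ∧
    GeneratesUpTo A n}

theorem Nat.sSup_eq_sSup_add_of_shift {S T : Set ℕ} (d : ℕ) (hT : BddAbove T)
    (hT₀ : T.Nonempty) (hST : ∀ n ∈ S, n - d ∈ T) (hTS : ∀ n ∈ T, n + d ∈ S) :
    sSup S = sSup T + d := by
  have hmem : sSup T + d ∈ S := hTS _ (Nat.sSup_mem hT₀ hT)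
  have hbound : ∀ n ∈ S, n ≤ sSup T + d := fun n hn => by
    have := le_csSup hT (hST n hn)
    omega
  exact le_antisymm (csSup_le ⟨_, hmem⟩ hbound) (le_csSup ⟨_, hbound⟩ hmem)

section Generation

variable {A B : Finset ℕ} {c n : ℕ}

theorem Generates.mono (h : Generates A c) (hAB : A ⊆ B) : Generates B c := by
  rcases h with hc | ⟨a, ha, b, hb, rfl⟩
  · exact .inl (hAB hc)
  · exact .inr ⟨a, hAB ha, b, hAB hb, rfl⟩

theorem GeneratesUpTo.mono (h : GeneratesUpTo A n) (hAB : A ⊆ B) : GeneratesUpTo B n :=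
  fun c hc₁ hcn => (h c hc₁ hcn).mono hAB

theorem GeneratesUpTo.le_card_add_card_mul (h : GeneratesUpTo A n) :
    n ≤ A.card + A.card * A.card := by
  have hsub : Finset.Icc 1 n ⊆ A ∪ (A ×ˢ A).image (fun p => p.1 + p.2) := by
    intro c hc
    rw [Finset.mem_Icc] at hc
    rcases h c hc.1 hc.2 with hcA | ⟨a, ha, b, hb, rfl⟩
    · exact Finset.mem_union_left _ hcA
    · exact Finset.mem_union_right _ (Finset.mem_image_of_mem _ (Finset.mk_mem_product ha hb))
  calc n = (Finset.Icc 1 n).card := by simp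
    _ ≤ A.card + ((A ×ˢ A).image (fun p => p.1 + p.2)).card :=
      (Finset.card_le_card hsub).trans (Finset.card_union_le _ _)
    _ ≤ A.card + A.card * A.card := by
      grw [Finset.card_image_le, Finset.card_product]

theorem GeneratesUpTo.filter_le (h : GeneratesUpTo A n) :
    GeneratesUpTo (A.filter (· ≤ n)) n := by
  intro c hc₁ hcn
  rcases h c hc₁ hcn with hcA | ⟨a, ha, b, hb, rfl⟩
  · exact .inl (Finset.mem_filter.2 ⟨hcA, hcn⟩)
  · exact .inr ⟨a, Finset.mem_filter.2 ⟨ha, by omega⟩, b, Finset.mem_filter.2 ⟨hb, by omega⟩,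
      rfl⟩

end Generation

section Chains

variable {A : Finset ℕ}

theorem AdditionChain.exists_eq_add_of_generates (hA : AdditionChain A) {c : ℕ} (hc : 2 ≤ c)
    (h : Generates A c) : ∃ x ∈ A, ∃ y ∈ A, 0 < x ∧ 0 < y ∧ c = x + y := by
  have of_mem : c ∈ A → ∃ x ∈ A, ∃ y ∈ A, 0 < x ∧ 0 < y ∧ c = x + y := fun hcA => by
    obtain ⟨x, hx, y, hy, hxc, hyc, rfl⟩ := hA.2 c hcA (by omega)
    exact ⟨x, hx, y, hy, by omega, by omega, rfl⟩
  rcases h with hcA | ⟨x, hx, y, hy, rfl⟩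
  · exact of_mem hcA
  · rcases Nat.eq_zero_or_pos x with rfl | hx₀
    · exact of_mem (by simpa using hy)
    rcases Nat.eq_zero_or_pos y with rfl | hy₀
    · exact of_mem (by simpa using hx)
    exact ⟨x, hx, y, hy, hx₀, hy₀, rfl⟩

theorem AdditionChain.insert_add_self (hA : AdditionChain A) {a : ℕ} (ha : a ∈ A) :
    AdditionChain (insert (a + a) A) := by
  refine ⟨Finset.mem_insert_of_mem hA.1, fun b hb hb₁ => ?_⟩
  rcases Finset.mem_insert.1 hb with rfl | hbA
  · exact ⟨a, Finset.mem_insert_of_mem ha, a, Finset.mem_insert_of_mem ha, by omega, by omega,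
      rfl⟩
  · obtain ⟨x, hx, y, hy, hxb, hyb, rfl⟩ := hA.2 b hbA hb₁
    exact ⟨x, Finset.mem_insert_of_mem hx, y, Finset.mem_insert_of_mem hy, hxb, hyb, rfl⟩

theorem AdditionChain.exists_superset_card_eq (hA : AdditionChain A) (hpos : ∀ a ∈ A, 0 < a)
    (j : ℕ) : ∃ A' : Finset ℕ, A ⊆ A' ∧ (∀ a ∈ A', 0 < a) ∧ AdditionChain A' ∧
      A'.card = A.card + j := by
  induction j with
  | zero => exact ⟨A, subset_rfl, hpos, hA, rfl⟩
  | succ j ih =>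
    obtain ⟨A', hAA', hpos', hA', hcard⟩ := ih
    have hne : A'.Nonempty := ⟨1, hA'.1⟩
    have hmax₁ : 1 ≤ A'.max' hne := A'.le_max' 1 hA'.1
    have hnotMem : A'.max' hne + A'.max' hne ∉ A' := fun h => by
      have := A'.le_max' _ h
      omega
    refine ⟨_, hAA'.trans (Finset.subset_insert _ _), ?_, hA'.insert_add_self (A'.max'_mem hne),
      by rw [Finset.card_insert_of_notMem hnotMem, hcard, add_assoc]⟩
    intro a ha
    rcases Finset.mem_insert.1 ha with rfl | haA'
    · omega
    · exact hpos' a haA'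

end Chains

def shiftDown (A : Finset ℕ) : Finset ℕ :=
  (A.erase 1).image (· - 1)

def shiftUp (B : Finset ℕ) : Finset ℕ :=
  insert 1 (B.image (· + 1))

section ShiftDown

variable {A : Finset ℕ}

theorem sub_one_mem_shiftDown {a : ℕ} (ha : a ∈ A) (ha₁ : a ≠ 1) : a - 1 ∈ shiftDown A :=
  Finset.mem_image_of_mem _ (Finset.mem_erase.2 ⟨ha₁, ha⟩)

theorem pos_of_mem_shiftDown (hpos : ∀ a ∈ A, 0 < a) : ∀ b ∈ shiftDown A, 0 < b := by
  simp only [shiftDown, Finset.mem_image, Finset.mem_erase]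
  rintro _ ⟨a, ⟨ha₁, ha⟩, rfl⟩
  have := hpos a ha
  omega

theorem card_shiftDown (h₁ : 1 ∈ A) : (shiftDown A).card = A.card - 1 := by
  rw [shiftDown, Finset.card_image_of_injOn, Finset.card_erase_of_mem h₁]
  intro a ha b hb hab
  have ha₁ := (Finset.mem_erase.1 ha).1
  have hb₁ := (Finset.mem_erase.1 hb).1
  simp only at hab
  omega

theorem AdditionChain.generatesUpTo_shiftDown (hA : AdditionChain A) {n : ℕ}
    (h : GeneratesUpTo A n) : GeneratesUpTo (shiftDown A) (n - 2) := by
  intro c hc₁ hcn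
  obtain ⟨x, hx, y, hy, hx₀, hy₀, hxy⟩ :=
    hA.exists_eq_add_of_generates (by omega) (h (c + 2) (by omega) (by omega))
  by_cases hx₁ : x = 1
  · exact .inl (by simpa [show y - 1 = c by omega] using sub_one_mem_shiftDown hy (by omega))
  by_cases hy₁ : y = 1
  · exact .inl (by simpa [show x - 1 = c by omega] using sub_one_mem_shiftDown hx hx₁)
  exact .inr ⟨x - 1, sub_one_mem_shiftDown hx hx₁, y - 1, sub_one_mem_shiftDown hy hy₁,
    by omega⟩

end ShiftDown

section ShiftUp

variable {B : Finset ℕ}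

theorem one_mem_shiftUp : 1 ∈ shiftUp B :=
  Finset.mem_insert_self _ _

theorem add_one_mem_shiftUp {b : ℕ} (hb : b ∈ B) : b + 1 ∈ shiftUp B :=
  Finset.mem_insert_of_mem (Finset.mem_image_of_mem _ hb)

theorem pos_of_mem_shiftUp : ∀ a ∈ shiftUp B, 0 < a := by
  simp only [shiftUp, Finset.mem_insert, Finset.mem_image]
  rintro a (rfl | ⟨b, -, rfl⟩) <;> omega

theorem card_shiftUp_le : (shiftUp B).card ≤ B.card + 1 :=
  (Finset.card_insert_le _ _).trans (Nat.add_le_add_right Finset.card_image_le 1)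

theorem generatesUpTo_shiftUp {m : ℕ} (h : GeneratesUpTo B m) :
    GeneratesUpTo (shiftUp B) (m + 2) := by
  intro c hc₁ hcm
  obtain rfl | rfl | hc₃ : c = 1 ∨ c = 2 ∨ 3 ≤ c := by omega
  · exact .inl one_mem_shiftUp
  · exact .inr ⟨1, one_mem_shiftUp, 1, one_mem_shiftUp, rfl⟩
  rcases h (c - 2) (by omega) (by omega) with hB | ⟨x, hx, y, hy, hxy⟩
  · exact .inr ⟨1, one_mem_shiftUp, c - 2 + 1, add_one_mem_shiftUp hB, by omega⟩
  · exact .inr ⟨x + 1, add_one_mem_shiftUp hx, y + 1, add_one_mem_shiftUp hy, by omega⟩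

theorem GeneratesUpTo.additionChain_shiftUp {m : ℕ} (h : GeneratesUpTo B m)
    (hle : ∀ b ∈ B, b ≤ m + 1) : AdditionChain (shiftUp B) := by
  refine ⟨one_mem_shiftUp, fun a ha ha₁ => ?_⟩
  simp only [shiftUp, Finset.mem_insert, Finset.mem_image] at ha
  obtain rfl | ⟨b, hb, rfl⟩ := ha
  · omega
  obtain rfl | hb₂ : b = 1 ∨ 2 ≤ b := by omega
  · exact ⟨1, one_mem_shiftUp, 1, one_mem_shiftUp, by omega, by omega, rfl⟩
  rcases h (b - 1) (by omega) (by have := hle b hb; omega) with hB | ⟨x, hx, y, hy, hxy⟩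
  · exact ⟨1, one_mem_shiftUp, b - 1 + 1, add_one_mem_shiftUp hB, by omega, by omega, by omega⟩
  · exact ⟨x + 1, add_one_mem_shiftUp hx, y + 1, add_one_mem_shiftUp hy,
      by omega, by omega, by omega⟩

end ShiftUp

theorem exists_chain_of_basis {B : Finset ℕ} {m k : ℕ} (hk : B.card + 1 ≤ k)
    (h : GeneratesUpTo B m) : ∃ A : Finset ℕ, (∀ a ∈ A, 0 < a) ∧ AdditionChain A ∧
      A.card = k ∧ GeneratesUpTo A (m + 2) := by
  set B' := B.filter (· ≤ m)
  have hB' : GeneratesUpTo B' m := h.filter_le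
  have hchain : AdditionChain (shiftUp B') :=
    hB'.additionChain_shiftUp fun b hb => by have := (Finset.mem_filter.1 hb).2; omega
  have hcard : (shiftUp B').card ≤ k :=
    card_shiftUp_le.trans (by grw [Finset.card_filter_le]; exact hk)
  obtain ⟨A, hsub, hpos, hA, hAcard⟩ :=
    hchain.exists_superset_card_eq pos_of_mem_shiftUp (k - (shiftUp B').card)
  exact ⟨A, hpos, hA, by omega, (generatesUpTo_shiftUp hB').mono hsub⟩

/-- For every k > 1, n̄(k) = n(k-1) + 2. -/
theorem maxChainRange_eq (k : ℕ) (hk : 1 < k) :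
    maxChainRange k = maxBasisRange (k - 1) + 2 := by
  refine Nat.sSup_eq_sSup_add_of_shift 2 ?bdd ?nonempty ?down ?up
  case bdd =>
    refine ⟨(k - 1) + (k - 1) * (k - 1), ?_⟩
    rintro n ⟨B, -, hBcard, hB⟩
    exact hBcard ▸ hB.le_card_add_card_mul
  case nonempty =>
    exact ⟨0, Finset.Icc 1 (k - 1), fun a ha => (Finset.mem_Icc.1 ha).1, by simp,
      fun c hc₁ hc₀ => by omega⟩
  case down =>
    rintro n ⟨A, hpos, hA, rfl, hgen⟩
    exact ⟨shiftDown A, pos_of_mem_shiftDown hpos, card_shiftDown hA.1,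
      hA.generatesUpTo_shiftDown hgen⟩
  case up =>
    rintro m ⟨B, -, hBcard, hB⟩
    exact exists_chain_of_basis (by omega) hB
end
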